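/- There exist elements u, v of PGL₂(𝔽₁₃) satisfying u² = v¹³ = (u·v²)⁴ = (u·v·u·v⁴)² = 1 that generate PGL₂(𝔽₁₃). -/

import Mathlib

open Matrix MatrixGroups

/-!
Over a field every invertible matrix is a product of transvections and a diagonal matrix, so a
subgroup of `GL₂(𝔽₁₃)` containing the scalars is everything as soon as it contains the two
elementary transvections and `diag(2, 1)`, 2 being a primitive root mod 13. For
`U = [[0, 1], [6, 0]]` and `V = [[1, 1], [0, 1]]`, the upper transvection is `V`, the lower one is
`U V¹¹ U⁻¹`, and `U V U V² U V = diag(7, 10)` is `diag(2, 1)` up to a scalar. The relations hold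
because the corresponding words in `U, V` are scalar matrices.
-/

namespace Matrix

variable {n R : Type*} [Fintype n] [DecidableEq n] [CommRing R]

theorem transvection_natCast_eq_pow {i j : n} (hij : i ≠ j) (k : ℕ) :
    transvection i j (k : R) = transvection i j 1 ^ k := by
  induction k with
  | zero => simp
  | succ k ih => rw [pow_succ, ← ih, transvection_mul_transvection_same _ _ hij, Nat.cast_succ]

namespace GeneralLinearGroup

theorem scalar_mem_ofUnits_of_center_le {S : Subgroup (GL n R)}
    (hS : Subgroup.center (GL n R) ≤ S) (a : Rˣ) : Matrix.scalar n (a : R) ∈ S.ofUnits :=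
  S.mem_ofUnits (y := scalar n a) (hS (mem_center_iff_val_mem_range_scalar.2 ⟨a, rfl⟩)) rfl

theorem mk'_center_eq_one_of_val_eq_scalar {g : GL n R} (a : R)
    (h : (g : Matrix n n R) = Matrix.scalar n a) :
    QuotientGroup.mk' (Subgroup.center (GL n R)) g = 1 :=
  (QuotientGroup.eq_one_iff g).2 (mem_center_iff_val_mem_range_scalar.2 ⟨a, h.symm⟩)

theorem transvection_mem_ofUnits_of_one_mem {p : ℕ} [NeZero p] {S : Subgroup (GL n (ZMod p))}
    (hS : ∀ i j : n, i ≠ j → transvection i j 1 ∈ S.ofUnits) (t : TransvectionStruct n (ZMod p)) :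
    t.toMatrix ∈ S.ofUnits := by
  rw [TransvectionStruct.toMatrix, ← ZMod.natCast_zmod_val t.c,
    transvection_natCast_eq_pow t.hij]
  exact pow_mem (hS _ _ t.hij) _

theorem eq_top_of_transvection_mem_of_diagonal_mem {K : Type*} [Field K] {S : Subgroup (GL n K)}
    (htrans : ∀ t : TransvectionStruct n K, t.toMatrix ∈ S.ofUnits)
    (hdiag : ∀ D : n → K, Matrix.det (diagonal D) ≠ 0 → diagonal D ∈ S.ofUnits) : S = ⊤ := by
  refine eq_top_iff.2 fun g _ => S.mem_of_mem_val_ofUnits ?_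
  exact diagonal_transvection_induction_of_det_ne_zero (· ∈ S.ofUnits) g
    ((isUnit_iff_isUnit_det _).1 g.isUnit).ne_zero hdiag htrans fun _ _ _ _ => mul_mem

theorem diagonal_fin_two_mem_ofUnits {K : Type*} [Field K] {S : Subgroup (GL (Fin 2) K)}
    (hS : Subgroup.center (GL (Fin 2) K) ≤ S) {x : K} (hx : ∀ a : K, a ≠ 0 → ∃ k : ℕ, x ^ k = a)
    (hxS : diagonal ![x, 1] ∈ S.ofUnits) (D : Fin 2 → K) (hD : Matrix.det (diagonal D) ≠ 0) :
    diagonal D ∈ S.ofUnits := by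
  rw [det_diagonal, Fin.prod_univ_two] at hD
  obtain ⟨hD0, hD1⟩ := mul_ne_zero_iff.1 hD
  obtain ⟨k, hk⟩ := hx (D 0 / D 1) (div_ne_zero hD0 hD1)
  have hdecomp : diagonal D = Matrix.scalar (Fin 2) (D 1) * diagonal ![x, 1] ^ k := by
    rw [diagonal_pow, scalar_apply, diagonal_mul_diagonal]
    congr 1
    ext i
    fin_cases i <;> simp [hk, mul_div_cancel₀ _ hD1]
  rw [hdecomp]
  exact mul_mem (scalar_mem_ofUnits_of_center_le hS (Units.mk0 _ hD1)) (pow_mem hxS k)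

end GeneralLinearGroup
end Matrix

namespace PGL2F13

local instance : Fact (Nat.Prime 13) := ⟨by norm_num⟩

abbrev π := QuotientGroup.mk' (Subgroup.center (GL (Fin 2) (ZMod 13)))

def U : GL (Fin 2) (ZMod 13) := ⟨!![0, 1; 6, 0], !![0, 11; 1, 0], by decide, by decide⟩
def V : GL (Fin 2) (ZMod 13) := ⟨!![1, 1; 0, 1], !![1, 12; 0, 1], by decide, by decide⟩

theorem closure_eq_top : Subgroup.closure ({π U, π V} : Set _) = ⊤ := by
  set S := (Subgroup.closure ({π U, π V} : Set _)).comap π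
  have hU : U ∈ S := Subgroup.subset_closure (Set.mem_insert _ _)
  have hV : V ∈ S := Subgroup.subset_closure (Set.mem_insert_of_mem _ rfl)
  have hcenter : Subgroup.center _ ≤ S := by
    rw [← QuotientGroup.ker_mk' (Subgroup.center _)]
    exact MonoidHom.ker_le_comap _ _
  have htrans : ∀ i j : Fin 2, i ≠ j → transvection i j 1 ∈ S.ofUnits := by
    intro i j hij
    fin_cases i <;> fin_cases j
    · exact absurd rfl hij
    · exact S.mem_ofUnits hV (by decide)
    · exact S.mem_ofUnits (mul_mem (mul_mem hU (pow_mem hV 11)) (inv_mem hU)) (by decide)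
    · exact absurd rfl hij
  have hdiag : diagonal ![2, 1] ∈ S.ofUnits := by
    have hW : U * V * U * V ^ 2 * U * V ∈ S :=
      mul_mem (mul_mem (mul_mem (mul_mem (mul_mem hU hV) hU) (pow_mem hV 2)) hU) hV
    convert mul_mem (GeneralLinearGroup.scalar_mem_ofUnits_of_center_le hcenter
      (Units.mk0 4 (by decide))) (S.mem_ofUnits hW rfl) using 1
    decide
  have hgen : ∀ a : ZMod 13, a ≠ 0 → ∃ k : ℕ, 2 ^ k = a := by
    intro a ha
    obtain ⟨k, hk⟩ := (by decide : ∀ a : ZMod 13, a ≠ 0 → ∃ k : Fin 12, 2 ^ (k : ℕ) = a) a ha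
    exact ⟨k, hk⟩
  have hS : S = ⊤ := GeneralLinearGroup.eq_top_of_transvection_mem_of_diagonal_mem
    (GeneralLinearGroup.transvection_mem_ofUnits_of_one_mem htrans)
    (GeneralLinearGroup.diagonal_fin_two_mem_ofUnits hcenter hgen hdiag)
  refine eq_top_iff.2 fun x _ => ?_
  obtain ⟨g, rfl⟩ := QuotientGroup.mk'_surjective _ x
  exact (hS ▸ Subgroup.mem_top g : g ∈ S)

end PGL2F13

open PGL2F13 in
theorem stmt12 :
    ∃ u v : GL (Fin 2) (ZMod 13) ⧸ Subgroup.center (GL (Fin 2) (ZMod 13)),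
      u ^ 2 = 1 ∧ v ^ 13 = 1 ∧ (u * v ^ 2) ^ 4 = 1 ∧ (u * v * u * v ^ 4) ^ 2 = 1 ∧
        Subgroup.closure ({u, v} : Set _) = ⊤ := by
  refine ⟨π U, π V, ?_, ?_, ?_, ?_, closure_eq_top⟩ <;> simp only [← map_pow, ← map_mul]
  · exact GeneralLinearGroup.mk'_center_eq_one_of_val_eq_scalar 6 (by decide)
  · exact GeneralLinearGroup.mk'_center_eq_one_of_val_eq_scalar 1 (by decide)
  · exact GeneralLinearGroup.mk'_center_eq_one_of_val_eq_scalar 3 (by decide)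
  · exact GeneralLinearGroup.mk'_center_eq_one_of_val_eq_scalar 3 (by decide)
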